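/- arXiv:1306.1114 — 8 statements merged into one kernel-verified Lean document; each statement's English description precedes it below -/
import Mathlib

section
/- Let A be a Boolean (0/1) matrix of size n×n that is sign-nonsingular, i.e., there exists a permutation τ of {1,…,n} with A_{1,τ(1)} = … = A_{n,τ(n)} = 1, and every permutation σ with A_{1,σ(1)} = … = A_{n,σ(n)} = 1 has the same parity (sign) as τ. Then the n entries (1,τ(1)), …, (n,τ(n)) form a fooling set of A; in particular, the fooling set number of A is at least n. -/
/-- Entries of a Boolean matrix `A` at the positions in `S` form a fooling set:
`A p.1 q.2 = A q.1 p.2 = 1` holds exactly when the positions coincide. -/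
def IsFoolingSet {α β : Type*} (A : Matrix α β Bool) (S : Finset (α × β)) : Prop :=
  ∀ p ∈ S, ∀ q ∈ S, (A p.1 q.2 = true ∧ A q.1 p.2 = true) ↔ p = q

/-- The fooling set number of a Boolean matrix: the largest cardinality of a fooling set. -/
noncomputable def foolingSetNumber {α β : Type*} (A : Matrix α β Bool) : ℕ :=
  sSup {n | ∃ S : Finset (α × β), IsFoolingSet A S ∧ S.card = n}

/-- A square Boolean matrix is sign-nonsingular if some permutation `τ` picks out all-one
entries, and every permutation doing so has the same sign as `τ`. -/
def SignNonsingular {ι : Type*} [Fintype ι] [DecidableEq ι] (A : Matrix ι ι Bool) : Prop :=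
  ∃ τ : Equiv.Perm ι, (∀ i, A i (τ i) = true) ∧
    ∀ σ : Equiv.Perm ι, (∀ i, A i (σ i) = true) → Equiv.Perm.sign σ = Equiv.Perm.sign τ

/-- The determinantal rank of a Boolean matrix: the size of its largest
sign-nonsingular square submatrix. -/
noncomputable def detRank {α β : Type*} (A : Matrix α β Bool) : ℕ :=
  sSup {k | ∃ r : Fin k → α, ∃ c : Fin k → β,
    Function.Injective r ∧ Function.Injective c ∧ SignNonsingular (A.submatrix r c)}

/-- If `A` is a sign-nonsingular Boolean `n × n` matrix with witnessing permutation `τ`,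
then the entries `(i, τ i)` form a fooling set of `A`; in particular the fooling set
number of `A` is at least `n`. -/
theorem foolingSet_of_signNonsingular {n : ℕ} (A : Matrix (Fin n) (Fin n) Bool)
    (τ : Equiv.Perm (Fin n)) (hτ : ∀ i, A i (τ i) = true)
    (hsign : ∀ σ : Equiv.Perm (Fin n), (∀ i, A i (σ i) = true) →
      Equiv.Perm.sign σ = Equiv.Perm.sign τ) :
    IsFoolingSet A (Finset.univ.image fun i => (i, τ i)) ∧ n ≤ foolingSetNumber A := by
  have hfool : IsFoolingSet A (Finset.univ.image fun i => (i, τ i)) := by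
    intro p hp q hq
    simp only [Finset.mem_image, Finset.mem_univ, true_and] at hp hq
    obtain ⟨i, rfl⟩ := hp
    obtain ⟨j, rfl⟩ := hq
    constructor
    · rintro ⟨h1, h2⟩
      by_contra hne
      have hij : i ≠ j := fun h => hne (by rw [h])
      set σ : Equiv.Perm (Fin n) := τ * Equiv.swap i j with hσ
      have hall : ∀ k, A k (σ k) = true := by
        intro k
        rcases eq_or_ne k i with rfl | hki
        · simpa [hσ, Equiv.swap_apply_left] using h1
        rcases eq_or_ne k j with rfl | hkj
        · simpa [hσ, Equiv.swap_apply_right] using h2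
        · simpa [hσ, Equiv.swap_apply_of_ne_of_ne hki hkj] using hτ k
      have hs := hsign σ hall
      rw [hσ, Equiv.Perm.sign_mul, Equiv.Perm.sign_swap hij] at hs
      have : (-1 : ℤˣ) = 1 := mul_left_cancel (hs.trans (mul_one (Equiv.Perm.sign τ)).symm)
      exact absurd this (by decide)
    · intro h
      have hij : i = j := (Prod.mk.injEq _ _ _ _ ▸ h).1
      subst hij
      exact ⟨hτ i, hτ i⟩
  refine ⟨hfool, ?_⟩
  have hcard : (Finset.univ.image fun i : Fin n => (i, τ i)).card = n := by
    rw [Finset.card_image_of_injective _ (fun a b h => (Prod.mk.injEq _ _ _ _ ▸ h).1)]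
    simp
  have hmem : n ∈ {m | ∃ S : Finset (Fin n × Fin n), IsFoolingSet A S ∧ S.card = m} :=
    ⟨_, hfool, hcard⟩
  refine le_csSup ⟨n * n, ?_⟩ hmem
  rintro m ⟨S, _, rfl⟩
  calc S.card ≤ Fintype.card (Fin n × Fin n) := S.card_le_univ.trans (by simp)
    _ = n * n := by simp
end

section
/- For every Boolean (0/1) matrix B, the fooling set number of B is greater than or equal to the determinantal rank of B. -/
/-- For every Boolean matrix, the fooling set number is at least the determinantal rank. -/
theorem detRank_le_foolingSetNumber {α β : Type*} [Fintype α] [Fintype β]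
    (B : Matrix α β Bool) : detRank B ≤ foolingSetNumber B := by
  classical
  have hbdd : BddAbove {n | ∃ S : Finset (α × β), IsFoolingSet B S ∧ S.card = n} := by
    refine ⟨Fintype.card (α × β), ?_⟩
    rintro n ⟨S, -, rfl⟩
    exact S.card_le_univ.trans (le_of_eq (Finset.card_univ))
  have hne : {k | ∃ r : Fin k → α, ∃ c : Fin k → β,
      Function.Injective r ∧ Function.Injective c ∧
      SignNonsingular (B.submatrix r c)} |>.Nonempty := by
    refine ⟨0, Fin.elim0, Fin.elim0, fun i => i.elim0, fun i => i.elim0, 1, fun i => i.elim0,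
      fun σ _ => ?_⟩
    have : σ = 1 := Subsingleton.elim _ _
    rw [this]
  refine csSup_le hne ?_
  rintro k ⟨r, c, hr, hc, τ, h1, h2⟩
  -- The entries (r i, c (τ i)) form a fooling set of size k.
  have hf : Function.Injective (fun i : Fin k => (r i, c (τ i))) := by
    intro i j h
    exact hr (congrArg Prod.fst h)
  set S : Finset (α × β) := Finset.univ.image (fun i : Fin k => (r i, c (τ i))) with hS
  have hfool : IsFoolingSet B S := by
    rintro p hp q hq
    simp only [hS, Finset.mem_image, Finset.mem_univ, true_and] at hp hq
    obtain ⟨i, rfl⟩ := hp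
    obtain ⟨j, rfl⟩ := hq
    constructor
    · rintro ⟨hpq, hqp⟩
      by_contra hne'
      have hij : i ≠ j := fun h => hne' (by rw [h])
      set σ : Equiv.Perm (Fin k) := τ * Equiv.swap i j with hσ
      have hall : ∀ m, (B.submatrix r c) m (σ m) = true := by
        intro m
        by_cases hmi : m = i
        · subst hmi
          simpa [hσ, Matrix.submatrix_apply, Equiv.swap_apply_left] using hpq
        · by_cases hmj : m = j
          · subst hmj
            simpa [hσ, Matrix.submatrix_apply, Equiv.swap_apply_right] using hqp
          · have : σ m = τ m := by
              simp [hσ, Equiv.swap_apply_of_ne_of_ne hmi hmj]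
            rw [Matrix.submatrix_apply, this]
            exact h1 m
      have hsign := h2 σ hall
      rw [hσ, map_mul, Equiv.Perm.sign_swap hij] at hsign
      have : (-1 : ℤˣ) = 1 := mul_left_cancel (hsign.trans (mul_one _).symm)
      simp at this
    · intro h
      have : i = j := hf h
      subst this
      exact ⟨h1 i, h1 i⟩
  have hcard : S.card = k := by
    rw [hS, Finset.card_image_of_injective _ hf, Finset.card_univ, Fintype.card_fin]
  exact le_csSup hbdd ⟨S, hfool, hcard⟩
end

section
/- Let G = (V,E) be a finite loopless directed graph such that (u,v) ∈ E implies (v,u) ∈ E, and let 𝒜 = 𝒜(G) be the associated Boolean matrix indexed by V ∪ E. If U ⊆ V is an independent set of G, then the square submatrix of 𝒜 whose rows and columns are indexed by U ∪ E is sign-nonsingular. Consequently, the determinantal rank of 𝒜(G) is at least |U| + |E|. -/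
/-- The Boolean matrix `𝒜(G)` of a symmetric loopless directed graph `G = (V, E)`,
with rows and columns indexed by `V ⊕ E`. -/
def adjMat {V : Type*} [DecidableEq V] (E : Finset (V × V)) :
    Matrix (V ⊕ {e : V × V // e ∈ E}) (V ⊕ {e : V × V // e ∈ E}) Bool :=
  fun x y =>
    match x, y with
    | Sum.inl u, Sum.inl v => decide (u = v ∨ (u, v) ∈ E)
    | Sum.inl u, Sum.inr e => decide (e.val.1 = u)
    | Sum.inr e, Sum.inl v => decide (e.val.2 = v)
    | Sum.inr e, Sum.inr f => decide (e = f)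

namespace SignNonsingular

variable {ι : Type*} [Fintype ι] [DecidableEq ι]

theorem of_forall_eq {A : Matrix ι ι Bool} (τ : Equiv.Perm ι) (hτ : ∀ i, A i (τ i) = true)
    (huniq : ∀ σ : Equiv.Perm ι, (∀ i, A i (σ i) = true) → σ = τ) : SignNonsingular A :=
  ⟨τ, hτ, fun σ hσ => by rw [huniq σ hσ]⟩

theorem submatrix_equiv {κ : Type*} [Fintype κ] [DecidableEq κ] {A : Matrix ι ι Bool}
    (h : SignNonsingular A) (e : κ ≃ ι) : SignNonsingular (A.submatrix e e) := by
  obtain ⟨τ, hτ, hsign⟩ := h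
  refine ⟨e.symm.permCongr τ, fun k => by simpa using hτ (e k), fun σ hσ => ?_⟩
  have hσ' : ∀ i, A i (e.permCongr σ i) = true := fun i => by
    simpa [Equiv.permCongr_apply] using hσ (e.symm i)
  simpa only [Equiv.Perm.sign_permCongr] using hsign _ hσ'

theorem card_le_detRank {α β : Type*} [Finite α] {A : Matrix α β Bool}
    {r : ι → α} {c : ι → β}
    (hr : Function.Injective r) (hc : Function.Injective c)
    (h : SignNonsingular (A.submatrix r c)) : Fintype.card ι ≤ detRank A := by
  have hbdd : BddAbove {k | ∃ r : Fin k → α, ∃ c : Fin k → β,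
      Function.Injective r ∧ Function.Injective c ∧ SignNonsingular (A.submatrix r c)} := by
    have := Fintype.ofFinite α
    exact ⟨Fintype.card α, fun k ⟨r, _, hr, _⟩ => by
      simpa using Fintype.card_le_of_injective r hr⟩
  let e := Fintype.equivFin ι
  refine le_csSup hbdd ⟨r ∘ e.symm, c ∘ e.symm, hr.comp e.symm.injective,
    hc.comp e.symm.injective, ?_⟩
  simpa only [← Matrix.submatrix_submatrix] using h.submatrix_equiv e.symm

end SignNonsingular

section adjMat

variable {V : Type*} [DecidableEq V] {E : Finset (V × V)}

@[simp]
theorem adjMat_inl_inl {u v : V} :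
    adjMat E (.inl u) (.inl v) = true ↔ u = v ∨ (u, v) ∈ E := by
  simp [adjMat]

@[simp]
theorem adjMat_inl_inr {u : V} {e : {e // e ∈ E}} :
    adjMat E (.inl u) (.inr e) = true ↔ e.1.1 = u := by
  simp [adjMat]

@[simp]
theorem adjMat_inr_inl {e : {e // e ∈ E}} {v : V} :
    adjMat E (.inr e) (.inl v) = true ↔ e.1.2 = v := by
  simp [adjMat]

@[simp]
theorem adjMat_inr_inr {e f : {e // e ∈ E}} : adjMat E (.inr e) (.inr f) = true ↔ e = f := by
  simp [adjMat]

variable {U : Finset V}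

/-- An off-diagonal entry could only send `u` to an edge `e = (u, v)` and then `e` to `v`,
so `u` and `v` would be adjacent vertices of `U`. -/
theorem perm_inl_eq_inl_of_adjMat (hU : ∀ u ∈ U, ∀ v ∈ U, (u, v) ∉ E)
    {σ : Equiv.Perm ({u // u ∈ U} ⊕ {e // e ∈ E})}
    (hσ : ∀ i, adjMat E (Sum.map Subtype.val id i) (Sum.map Subtype.val id (σ i)) = true)
    (u : {u // u ∈ U}) : σ (.inl u) = .inl u := by
  rcases hu : σ (.inl u) with v | e
  · have := hσ (.inl u)
    simp only [hu, Sum.map_inl, adjMat_inl_inl] at this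
    exact this.elim (fun h => congrArg _ (Subtype.ext h).symm) fun h => (hU _ u.2 _ v.2 h).elim
  · have hu' := hσ (.inl u)
    simp only [hu, Sum.map_inl, Sum.map_inr, id, adjMat_inl_inr] at hu'
    have he := hσ (.inr e)
    rcases hv : σ (.inr e) with v | f
    · simp only [hv, Sum.map_inl, Sum.map_inr, id, adjMat_inr_inl] at he
      exact (hU _ u.2 _ v.2 (by rw [← hu', ← he]; exact e.2)).elim
    · simp only [hv, Sum.map_inr, id, adjMat_inr_inr] at he
      subst he
      exact absurd (σ.injective (hu.trans hv.symm)) Sum.inl_ne_inr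

theorem perm_eq_one_of_adjMat (hU : ∀ u ∈ U, ∀ v ∈ U, (u, v) ∉ E)
    {σ : Equiv.Perm ({u // u ∈ U} ⊕ {e // e ∈ E})}
    (hσ : ∀ i, adjMat E (Sum.map Subtype.val id i) (Sum.map Subtype.val id (σ i)) = true) :
    σ = 1 := by
  ext (u | e)
  · simp [perm_inl_eq_inl_of_adjMat hU hσ u]
  · rcases he : σ (.inr e) with v | f
    · rw [← perm_inl_eq_inl_of_adjMat hU hσ v] at he
      exact absurd (σ.injective he) Sum.inr_ne_inl
    · have := hσ (.inr e)
      simp only [he, Sum.map_inr, id, adjMat_inr_inr] at this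
      simp [this]

theorem signNonsingular_adjMat_submatrix (hU : ∀ u ∈ U, ∀ v ∈ U, (u, v) ∉ E) :
    SignNonsingular ((adjMat E).submatrix
      (Sum.map (Subtype.val : {u // u ∈ U} → V) (id : {e // e ∈ E} → _))
      (Sum.map (Subtype.val : {u // u ∈ U} → V) (id : {e // e ∈ E} → _))) := by
  refine .of_forall_eq 1 (fun i => ?_) fun σ hσ => perm_eq_one_of_adjMat hU hσ
  rcases i with u | e <;> simp

end adjMat

theorem signNonsingular_submatrix_of_indep_general {V : Type*} [Fintype V] [DecidableEq V]
    (E : Finset (V × V))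
    (U : Finset V) (hU : ∀ u ∈ U, ∀ v ∈ U, (u, v) ∉ E) :
    SignNonsingular ((adjMat E).submatrix
        (Sum.map (Subtype.val : {u : V // u ∈ U} → V) (id : {e : V × V // e ∈ E} → _))
        (Sum.map (Subtype.val : {u : V // u ∈ U} → V) (id : {e : V × V // e ∈ E} → _))) ∧
      U.card + E.card ≤ detRank (adjMat E) := by
  have hsns := signNonsingular_adjMat_submatrix hU
  have hinj : Function.Injective
      (Sum.map (Subtype.val : {u : V // u ∈ U} → V) (id : {e : V × V // e ∈ E} → _)) :=
    Subtype.val_injective.sumMap Function.injective_id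
  exact ⟨hsns, by simpa using hsns.card_le_detRank hinj hinj⟩

/-- If `U` is an independent set of a symmetric loopless directed graph `G = (V, E)`,
then the square submatrix of `𝒜(G)` with rows and columns indexed by `U ∪ E` is
sign-nonsingular; consequently the determinantal rank of `𝒜(G)` is at least `|U| + |E|`. -/
theorem signNonsingular_submatrix_of_indep {V : Type*} [Fintype V] [DecidableEq V]
    (E : Finset (V × V)) (hloop : ∀ p ∈ E, p.1 ≠ p.2)
    (hsymm : ∀ u v : V, (u, v) ∈ E → (v, u) ∈ E)
    (U : Finset V) (hU : ∀ u ∈ U, ∀ v ∈ U, (u, v) ∉ E) :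
    SignNonsingular ((adjMat E).submatrix
        (Sum.map (Subtype.val : {u : V // u ∈ U} → V) (id : {e : V × V // e ∈ E} → _))
        (Sum.map (Subtype.val : {u : V // u ∈ U} → V) (id : {e : V × V // e ∈ E} → _))) ∧
      U.card + E.card ≤ detRank (adjMat E) :=
  signNonsingular_submatrix_of_indep_general E U hU
end

section
/- Let G = (V,E) be a finite loopless directed graph such that (u,v) ∈ E implies (v,u) ∈ E, and let 𝒜 = 𝒜(G) be the associated Boolean matrix indexed by V ∪ E. If U ⊆ V is an independent set of G, then the diagonal entries (x,x) with x ∈ U ∪ E form a fooling set of 𝒜. Consequently, the fooling set number of 𝒜(G) is at least |U| + |E|. -/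
/-- If `U` is an independent set of a symmetric loopless directed graph `G = (V, E)`,
then the diagonal positions `(x, x)` with `x ∈ U ∪ E` form a fooling set of `𝒜(G)`;
consequently the fooling set number of `𝒜(G)` is at least `|U| + |E|`. -/
theorem foolingSet_diag_of_indep {V : Type*} [Fintype V] [DecidableEq V]
    (E : Finset (V × V)) (hloop : ∀ p ∈ E, p.1 ≠ p.2)
    (hsymm : ∀ u v : V, (u, v) ∈ E → (v, u) ∈ E)
    (U : Finset V) (hU : ∀ u ∈ U, ∀ v ∈ U, (u, v) ∉ E) :
    IsFoolingSet (adjMat E)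
        ((U.image fun u =>
            ((Sum.inl u : V ⊕ {e : V × V // e ∈ E}), (Sum.inl u : V ⊕ {e : V × V // e ∈ E}))) ∪
          (Finset.univ.image fun e : {e : V × V // e ∈ E} =>
            ((Sum.inr e : V ⊕ {e : V × V // e ∈ E}), (Sum.inr e : V ⊕ {e : V × V // e ∈ E})))) ∧
      U.card + E.card ≤ foolingSetNumber (adjMat E) := by
  classical
  set S := ((U.image fun u =>
            ((Sum.inl u : V ⊕ {e : V × V // e ∈ E}), (Sum.inl u : V ⊕ {e : V × V // e ∈ E}))) ∪
          (Finset.univ.image fun e : {e : V × V // e ∈ E} =>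
            ((Sum.inr e : V ⊕ {e : V × V // e ∈ E}), (Sum.inr e : V ⊕ {e : V × V // e ∈ E})))) with hS
  have hmem : ∀ p ∈ S, (p.1 = p.2) ∧
      ((∃ u ∈ U, p.1 = Sum.inl u) ∨ (∃ e : {e : V × V // e ∈ E}, p.1 = Sum.inr e)) := by
    intro p hp
    simp only [hS, Finset.mem_union, Finset.mem_image, Finset.mem_univ, true_and] at hp
    rcases hp with ⟨u, hu, rfl⟩ | ⟨e, _, rfl⟩
    · exact ⟨rfl, Or.inl ⟨u, hu, rfl⟩⟩
    · exact ⟨rfl, Or.inr ⟨e, rfl⟩⟩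
  have hfool : IsFoolingSet (adjMat E) S := by
    intro p hp q hq
    obtain ⟨hp1, hp2⟩ := hmem p hp
    obtain ⟨hq1, hq2⟩ := hmem q hq
    obtain ⟨x, y⟩ := p
    obtain ⟨z, w⟩ := q
    simp only at hp1 hq1
    subst hp1; subst hq1
    constructor
    · rintro ⟨h1, h2⟩
      rcases hp2 with ⟨u, hu, rfl⟩ | ⟨e, rfl⟩ <;> rcases hq2 with ⟨v, hv, rfl⟩ | ⟨f, rfl⟩
      · simp only [adjMat, decide_eq_true_eq] at h1 h2
        rcases h1 with rfl | h1
        · rfl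
        · exact absurd h1 (hU u hu v hv)
      · simp only [adjMat, decide_eq_true_eq] at h1 h2
        exact absurd (h1.trans h2.symm) (hloop f.val f.prop)
      · simp only [adjMat, decide_eq_true_eq] at h1 h2
        exact absurd (h2.trans h1.symm) (hloop e.val e.prop)
      · simp only [adjMat, decide_eq_true_eq] at h1
        subst h1; rfl
    · intro h
      have hxz : x = z := congrArg Prod.fst h
      subst hxz
      rcases hp2 with ⟨u, hu, rfl⟩ | ⟨e, rfl⟩ <;>
        simp [adjMat]
  refine ⟨hfool, ?_⟩
  have hcard : S.card = U.card + E.card := by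
    rw [hS, Finset.card_union_of_disjoint, Finset.card_image_of_injective,
      Finset.card_image_of_injective]
    · simp [Fintype.card_coe]
    · intro a b h; simpa using h
    · intro a b h; simpa using h
    · simp only [Finset.disjoint_left, Finset.mem_image, Finset.mem_univ, true_and]
      rintro p ⟨u, hu, rfl⟩ ⟨e, he⟩
      simp at he
  have hbdd : BddAbove {n | ∃ T : Finset ((V ⊕ {e : V × V // e ∈ E}) ×
      (V ⊕ {e : V × V // e ∈ E})), IsFoolingSet (adjMat E) T ∧ T.card = n} := by
    refine ⟨Fintype.card ((V ⊕ {e : V × V // e ∈ E}) × (V ⊕ {e : V × V // e ∈ E})), ?_⟩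
    rintro n ⟨T, _, rfl⟩
    exact Finset.card_le_univ T
  calc U.card + E.card = S.card := hcard.symm
    _ ≤ foolingSetNumber (adjMat E) := le_csSup hbdd ⟨S, hfool, rfl⟩
end

section
/- Let G = (V,E) be a finite loopless directed graph such that (u,v) ∈ E implies (v,u) ∈ E, and let 𝒜 = 𝒜(G) be the associated Boolean matrix indexed by V ∪ E. Let S ⊆ (V ∪ E) × (V ∪ E) be a set of positions such that the entries 𝒜_{ij} with (i,j) running over S form a fooling set. Then for every edge e = (u,v) ∈ E, the intersection of S with the set {e,u} × {e,v} has cardinality at most 1. -/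
/-- If the entries of `𝒜(G)` at the positions in `S` form a fooling set, then for every
edge `e = (u, v) ∈ E`, the intersection of `S` with `{e, u} × {e, v}` has at most one
element. -/
theorem foolingSet_inter_edge_square {V : Type*} [Fintype V] [DecidableEq V]
    (E : Finset (V × V)) (hloop : ∀ p ∈ E, p.1 ≠ p.2)
    (hsymm : ∀ u v : V, (u, v) ∈ E → (v, u) ∈ E)
    (S : Finset ((V ⊕ {e : V × V // e ∈ E}) × (V ⊕ {e : V × V // e ∈ E})))
    (hS : IsFoolingSet (adjMat E) S)
    (u v : V) (he : (u, v) ∈ E) :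
    (S ∩ (({Sum.inr ⟨(u, v), he⟩, Sum.inl u} : Finset (V ⊕ {e : V × V // e ∈ E})) ×ˢ
          ({Sum.inr ⟨(u, v), he⟩, Sum.inl v} : Finset (V ⊕ {e : V × V // e ∈ E})))).card ≤ 1 := by
  have key : ∀ x ∈ ({Sum.inr ⟨(u, v), he⟩, Sum.inl u} : Finset (V ⊕ {e : V × V // e ∈ E})),
      ∀ y ∈ ({Sum.inr ⟨(u, v), he⟩, Sum.inl v} : Finset (V ⊕ {e : V × V // e ∈ E})),
      adjMat E x y = true := by
    intro x hx y hy
    simp only [Finset.mem_insert, Finset.mem_singleton] at hx hy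
    rcases hx with rfl | rfl <;> rcases hy with rfl | rfl <;> simp [adjMat, he]
  rw [Finset.card_le_one]
  intro p hp q hq
  rw [Finset.mem_inter, Finset.mem_product] at hp hq
  exact (hS p hp.1 q hq.1).mp
    ⟨key _ hp.2.1 _ hq.2.2, key _ hq.2.1 _ hp.2.2⟩
end

section
/- Let G = (V,E) be a finite loopless directed graph such that (u,v) ∈ E implies (v,u) ∈ E, and let 𝒜 = 𝒜(G) be the associated Boolean matrix indexed by V ∪ E. Let S ⊆ (V ∪ E) × (V ∪ E) be a set of positions of cardinality |E| + h such that the entries 𝒜_{ij} with (i,j) running over S form a fooling set. Then S contains at least h elements of the form (w,w) with w ∈ V. -/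
/-!
Every entry of a fooling set is a one. A one of `𝒜(G)` off the vertex diagonal lies in the
`2 × 2` all-ones block with rows `u, e` and columns `v, e` of some edge `e = (u, v)`, and two
entries of a fooling set never share an all-ones block. So at most `|E|` entries of `S` lie off
the vertex diagonal.
-/

namespace IsFoolingSet

variable {α β : Type*} {A : Matrix α β Bool} {S : Finset (α × β)}

theorem apply_self (hS : IsFoolingSet A S) {p : α × β} (hp : p ∈ S) : A p.1 p.2 = true :=
  ((hS p hp p hp).2 rfl).1

theorem subsingleton_of_forall_apply_eq_true (hS : IsFoolingSet A S) {R : Set α} {C : Set β}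
    (hRC : ∀ x ∈ R, ∀ y ∈ C, A x y = true) :
    ({p ∈ S | p.1 ∈ R ∧ p.2 ∈ C} : Set (α × β)).Subsingleton := by
  rintro p ⟨hp, hpR, hpC⟩ q ⟨hq, hqR, hqC⟩
  exact (hS p hp q hq).1 ⟨hRC _ hpR _ hqC, hRC _ hqR _ hpC⟩

end IsFoolingSet

section EdgeBlock

variable {V : Type*} [DecidableEq V] {E : Finset (V × V)}

def edgeRows (e : {e : V × V // e ∈ E}) : Set (V ⊕ {e : V × V // e ∈ E}) :=
  {Sum.inl e.1.1, Sum.inr e}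

def edgeCols (e : {e : V × V // e ∈ E}) : Set (V ⊕ {e : V × V // e ∈ E}) :=
  {Sum.inl e.1.2, Sum.inr e}

theorem adjMat_eq_true_of_mem_edgeRows_of_mem_edgeCols (e : {e : V × V // e ∈ E})
    {x y : V ⊕ {e : V × V // e ∈ E}} (hx : x ∈ edgeRows e) (hy : y ∈ edgeCols e) :
    adjMat E x y = true := by
  rcases hx with rfl | rfl <;> rcases hy with rfl | rfl <;> simp [adjMat, e.2]

theorem exists_mem_edgeRows_mem_edgeCols_of_adjMat_eq_true {x y : V ⊕ {e : V × V // e ∈ E}}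
    (hxy : adjMat E x y = true) (hdiag : ¬ ∃ w : V, (x, y) = (Sum.inl w, Sum.inl w)) :
    ∃ e, x ∈ edgeRows e ∧ y ∈ edgeCols e := by
  rcases x with u | e <;> rcases y with v | f <;>
    simp only [adjMat, decide_eq_true_eq] at hxy
  · rcases hxy with rfl | huv
    · exact absurd ⟨u, rfl⟩ hdiag
    · exact ⟨⟨(u, v), huv⟩, by simp [edgeRows, edgeCols]⟩
  · exact ⟨f, by simp [edgeRows, edgeCols, hxy]⟩
  · exact ⟨e, by simp [edgeRows, edgeCols, hxy]⟩
  · exact ⟨e, by simp [edgeRows, edgeCols, hxy]⟩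

end EdgeBlock

theorem IsFoolingSet.card_filter_not_vertex_diag_le {V : Type*} [Fintype V] [DecidableEq V]
    {E : Finset (V × V)}
    {S : Finset ((V ⊕ {e : V × V // e ∈ E}) × (V ⊕ {e : V × V // e ∈ E}))}
    (hS : IsFoolingSet (adjMat E) S) :
    (S.filter fun p => ¬ ∃ w : V, p = (Sum.inl w, Sum.inl w)).card ≤ E.card := by
  rw [← Fintype.card_coe E, ← Finset.card_univ]
  refine Finset.card_le_card_of_forall_subsingleton
    (fun p e => p.1 ∈ edgeRows e ∧ p.2 ∈ edgeCols e) (fun p hp => ?_) (fun e _ => ?_)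
  · rw [Finset.mem_filter] at hp
    obtain ⟨e, he⟩ :=
      exists_mem_edgeRows_mem_edgeCols_of_adjMat_eq_true (hS.apply_self hp.1) hp.2
    exact ⟨e, Finset.mem_univ e, he⟩
  · refine (hS.subsingleton_of_forall_apply_eq_true fun x hx y hy =>
      adjMat_eq_true_of_mem_edgeRows_of_mem_edgeCols e hx hy).anti ?_
    exact fun p hp => ⟨(Finset.mem_filter.1 hp.1).1, hp.2⟩

theorem foolingSet_diag_vertices_card_general {V : Type*} [Fintype V] [DecidableEq V]
    (E : Finset (V × V))
    (S : Finset ((V ⊕ {e : V × V // e ∈ E}) × (V ⊕ {e : V × V // e ∈ E})))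
    (hS : IsFoolingSet (adjMat E) S) (h : ℕ) (hcard : S.card = E.card + h) :
    h ≤ (S.filter fun p => ∃ w : V, p = (Sum.inl w, Sum.inl w)).card := by
  have hsplit := Finset.card_filter_add_card_filter_not
    (s := S) (p := fun p => ∃ w : V, p = (Sum.inl w, Sum.inl w))
  have hoff := hS.card_filter_not_vertex_diag_le
  omega

/-- If the entries of `𝒜(G)` at the positions in `S` form a fooling set and `|S| = |E| + h`,
then `S` contains at least `h` positions of the form `(w, w)` with `w ∈ V`. -/
theorem foolingSet_diag_vertices_card {V : Type*} [Fintype V] [DecidableEq V]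
    (E : Finset (V × V)) (hloop : ∀ p ∈ E, p.1 ≠ p.2)
    (hsymm : ∀ u v : V, (u, v) ∈ E → (v, u) ∈ E)
    (S : Finset ((V ⊕ {e : V × V // e ∈ E}) × (V ⊕ {e : V × V // e ∈ E})))
    (hS : IsFoolingSet (adjMat E) S) (h : ℕ) (hcard : S.card = E.card + h) :
    h ≤ (S.filter fun p => ∃ w : V, p = (Sum.inl w, Sum.inl w)).card :=
  foolingSet_diag_vertices_card_general E S hS h hcard
end

section
/- Let G = (V,E) be a finite loopless directed graph such that (u,v) ∈ E implies (v,u) ∈ E, and let 𝒜 = 𝒜(G) be the associated Boolean matrix indexed by V ∪ E. Let S ⊆ (V ∪ E) × (V ∪ E) be a set of positions such that the entries 𝒜_{ij} with (i,j) running over S form a fooling set. Then the set W = { w ∈ V : (w,w) ∈ S } is an independent set of G. -/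
/-- If the entries of `𝒜(G)` at the positions in `S` form a fooling set, then the set of
vertices `w` with `(w, w) ∈ S` is an independent set of `G`. -/
theorem foolingSet_diag_vertices_indep {V : Type*} [Fintype V] [DecidableEq V]
    (E : Finset (V × V)) (hloop : ∀ p ∈ E, p.1 ≠ p.2)
    (hsymm : ∀ u v : V, (u, v) ∈ E → (v, u) ∈ E)
    (S : Finset ((V ⊕ {e : V × V // e ∈ E}) × (V ⊕ {e : V × V // e ∈ E})))
    (hS : IsFoolingSet (adjMat E) S) :
    ∀ u v : V, (Sum.inl u, Sum.inl u) ∈ S → (Sum.inl v, Sum.inl v) ∈ S → (u, v) ∉ E := by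
  intro u v hu hv hE
  have h := (hS _ hu _ hv).mp
    ⟨by simp [adjMat, hE], by simp [adjMat, hsymm u v hE]⟩
  have : u = v := by simpa using h
  exact hloop (u, v) hE (by simpa using this)
end

section
/- Let G = (V,E) be a finite loopless directed graph such that (u,v) ∈ E implies (v,u) ∈ E, and let 𝒜(G) be the associated Boolean matrix indexed by V ∪ E. Then the fooling set number of 𝒜(G) equals |U'| + |E|, where U' is a largest independent set of G (i.e., it equals α(G) + |E|, with α(G) the independence number of G). -/
section Aux

variable {V : Type*} [DecidableEq V] (E : Finset (V × V))

/-- Auxiliary map sending a fooling-set position of `adjMat E` to a vertex or an edge. -/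
def gmap : (V ⊕ {e : V × V // e ∈ E}) × (V ⊕ {e : V × V // e ∈ E}) → V ⊕ (V × V)
  | (Sum.inl u, Sum.inl v) => if u = v then Sum.inl u else Sum.inr (u, v)
  | (Sum.inl _, Sum.inr e) => Sum.inr e.val
  | (Sum.inr e, _) => Sum.inr e.val

lemma adjMat_ll (u v : V) : adjMat E (Sum.inl u) (Sum.inl v) = decide (u = v ∨ (u, v) ∈ E) := rfl
lemma adjMat_le (u : V) (e : {e : V × V // e ∈ E}) :
    adjMat E (Sum.inl u) (Sum.inr e) = decide (e.val.1 = u) := rfl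
lemma adjMat_el (e : {e : V × V // e ∈ E}) (v : V) :
    adjMat E (Sum.inr e) (Sum.inl v) = decide (e.val.2 = v) := rfl
lemma adjMat_ee (e f : {e : V × V // e ∈ E}) :
    adjMat E (Sum.inr e) (Sum.inr f) = decide (e = f) := rfl

end Aux

/-- The fooling set number of `𝒜(G)` equals `α(G) + |E|`, where `α(G)` is the
independence number of `G`. -/
theorem foolingSetNumber_adjMat {V : Type*} [Fintype V] [DecidableEq V]
    (E : Finset (V × V)) (hloop : ∀ p ∈ E, p.1 ≠ p.2)
    (hsymm : ∀ u v : V, (u, v) ∈ E → (v, u) ∈ E) :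
    foolingSetNumber (adjMat E) =
      sSup {k | ∃ U : Finset V, (∀ u ∈ U, ∀ v ∈ U, (u, v) ∉ E) ∧ U.card = k} + E.card := by
  classical
  have hbddI : BddAbove {k | ∃ U : Finset V, (∀ u ∈ U, ∀ v ∈ U, (u, v) ∉ E) ∧ U.card = k} := by
    refine ⟨Fintype.card V, ?_⟩
    rintro n ⟨U, -, rfl⟩
    exact Finset.card_le_univ U
  have hneI : {k | ∃ U : Finset V, (∀ u ∈ U, ∀ v ∈ U, (u, v) ∉ E) ∧ U.card = k}.Nonempty :=
    ⟨0, ∅, by simp, rfl⟩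
  have hbddF : BddAbove {n | ∃ S : Finset ((V ⊕ {e : V × V // e ∈ E}) × (V ⊕ {e : V × V // e ∈ E})),
      IsFoolingSet (adjMat E) S ∧ S.card = n} := by
    refine ⟨Fintype.card ((V ⊕ {e : V × V // e ∈ E}) × (V ⊕ {e : V × V // e ∈ E})), ?_⟩
    rintro n ⟨S, -, rfl⟩
    exact Finset.card_le_univ S
  apply le_antisymm
  · -- upper bound
    apply csSup_le'
    rintro n ⟨S, hS, rfl⟩
    have hdiag : ∀ p ∈ S, adjMat E p.1 p.2 = true := fun p hp => ((hS p hp p hp).mpr rfl).1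
    have hfool : ∀ p ∈ S, ∀ q ∈ S, adjMat E p.1 q.2 = true → adjMat E q.1 p.2 = true → p = q :=
      fun p hp q hq h1 h2 => (hS p hp q hq).mp ⟨h1, h2⟩
    set U : Finset V := Finset.univ.filter (fun u => (Sum.inl u, Sum.inl u) ∈ S) with hUdef
    have hUmem : ∀ u, u ∈ U ↔ (Sum.inl u, Sum.inl u) ∈ S := by
      intro u; simp [hUdef]
    have hUind : ∀ u ∈ U, ∀ v ∈ U, (u, v) ∉ E := by
      intro u hu v hv huv
      have hu' := (hUmem u).mp hu
      have hv' := (hUmem v).mp hv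
      have h1 : adjMat E (Sum.inl u) (Sum.inl v) = true := by
        rw [adjMat_ll]; exact decide_eq_true (Or.inr huv)
      have h2 : adjMat E (Sum.inl v) (Sum.inl u) = true := by
        rw [adjMat_ll]; exact decide_eq_true (Or.inr (hsymm u v huv))
      have := hfool _ hu' _ hv' h1 h2
      have huv' : u = v := by simpa using congrArg Prod.fst this
      exact hloop (u, v) huv huv'
    -- the map gmap is injective on S
    have hinj : Set.InjOn (gmap E) ↑S := by
      rintro ⟨p1 | p1, p2 | p2⟩ hp ⟨q1 | q1, q2 | q2⟩ hq hg <;>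
        simp only [gmap, Sum.inl.injEq, Sum.inr.injEq, Finset.mem_coe] at hg hp hq
      -- (ll, ll)
      · have hdp := hdiag _ hp; have hdq := hdiag _ hq
        rw [adjMat_ll, decide_eq_true_eq] at hdp hdq
        by_cases h1 : p1 = p2 <;> by_cases h2 : q1 = q2 <;> simp [h1, h2] at hg
        · subst h1; subst h2; subst hg; rfl
        · obtain ⟨hg1, hg2⟩ := hg; subst hg1; subst hg2; rfl
      -- (ll, lr)
      · have hdp := hdiag _ hp; have hdq := hdiag _ hq
        rw [adjMat_ll, decide_eq_true_eq] at hdp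
        rw [adjMat_le, decide_eq_true_eq] at hdq
        by_cases h1 : p1 = p2 <;> simp [h1] at hg
        refine absurd (hfool _ hp _ hq ?_ ?_) (by simp)
        · rw [adjMat_le, decide_eq_true_eq, ← hg]
        · rw [adjMat_ll, decide_eq_true_eq]
          refine Or.inr ?_
          have : (q1, p2) = q2.val := by rw [← hdq, ← hg]
          rw [this]; exact q2.property
      -- (ll, rl)
      · have hdp := hdiag _ hp; have hdq := hdiag _ hq
        rw [adjMat_ll, decide_eq_true_eq] at hdp
        rw [adjMat_el, decide_eq_true_eq] at hdq
        by_cases h1 : p1 = p2 <;> simp [h1] at hg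
        refine absurd (hfool _ hp _ hq ?_ ?_) (by simp)
        · rw [adjMat_ll, decide_eq_true_eq]
          refine Or.inr ?_
          have : (p1, q2) = q1.val := by rw [← hdq, ← hg]
          rw [this]; exact q1.property
        · rw [adjMat_el, decide_eq_true_eq, ← hg]
      -- (ll, rr)
      · have hdp := hdiag _ hp; have hdq := hdiag _ hq
        rw [adjMat_ll, decide_eq_true_eq] at hdp
        rw [adjMat_ee, decide_eq_true_eq] at hdq
        by_cases h1 : p1 = p2 <;> simp [h1] at hg
        subst hdq
        refine absurd (hfool _ hp _ hq ?_ ?_) (by simp)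
        · rw [adjMat_le, decide_eq_true_eq, ← hg]
        · rw [adjMat_el, decide_eq_true_eq, ← hg]
      -- (lr, ll)
      · have hdp := hdiag _ hp; have hdq := hdiag _ hq
        rw [adjMat_le, decide_eq_true_eq] at hdp
        rw [adjMat_ll, decide_eq_true_eq] at hdq
        by_cases h1 : q1 = q2 <;> simp [h1] at hg
        refine absurd (hfool _ hq _ hp ?_ ?_) (by simp)
        · rw [adjMat_le, decide_eq_true_eq, hg]
        · rw [adjMat_ll, decide_eq_true_eq]
          refine Or.inr ?_
          have : (p1, q2) = p2.val := by rw [← hdp, hg]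
          rw [this]; exact p2.property
      -- (lr, lr)
      · have hdp := hdiag _ hp; have hdq := hdiag _ hq
        rw [adjMat_le, decide_eq_true_eq] at hdp hdq
        have h2 : p2 = q2 := Subtype.ext hg
        subst h2
        rw [← hdp, hdq]
      -- (lr, rl)
      · have hdp := hdiag _ hp; have hdq := hdiag _ hq
        rw [adjMat_le, decide_eq_true_eq] at hdp
        rw [adjMat_el, decide_eq_true_eq] at hdq
        refine absurd (hfool _ hp _ hq ?_ ?_) (by simp)
        · rw [adjMat_ll, decide_eq_true_eq]
          refine Or.inr ?_
          have : (p1, q2) = p2.val := by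
            rw [← hdp, ← hdq, hg]
          rw [this]; exact p2.property
        · rw [adjMat_ee, decide_eq_true_eq]
          exact Subtype.ext hg.symm
      -- (lr, rr)
      · have hdp := hdiag _ hp; have hdq := hdiag _ hq
        rw [adjMat_le, decide_eq_true_eq] at hdp
        rw [adjMat_ee, decide_eq_true_eq] at hdq
        subst hdq
        refine absurd (hfool _ hp _ hq ?_ ?_) (by simp)
        · rw [adjMat_le, decide_eq_true_eq, ← hg, hdp]
        · rw [adjMat_ee, decide_eq_true_eq]
          exact Subtype.ext hg.symm
      -- (rl, ll)
      · have hdp := hdiag _ hp; have hdq := hdiag _ hq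
        rw [adjMat_el, decide_eq_true_eq] at hdp
        rw [adjMat_ll, decide_eq_true_eq] at hdq
        by_cases h1 : q1 = q2 <;> simp [h1] at hg
        refine absurd (hfool _ hq _ hp ?_ ?_) (by simp)
        · rw [adjMat_ll, decide_eq_true_eq]
          refine Or.inr ?_
          have : (q1, p2) = p1.val := by rw [← hdp, hg]
          rw [this]; exact p1.property
        · rw [adjMat_el, decide_eq_true_eq, hg]
      -- (rl, lr)
      · have hdp := hdiag _ hp; have hdq := hdiag _ hq
        rw [adjMat_el, decide_eq_true_eq] at hdp
        rw [adjMat_le, decide_eq_true_eq] at hdq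
        refine absurd (hfool _ hq _ hp ?_ ?_) (by simp)
        · rw [adjMat_ll, decide_eq_true_eq]
          refine Or.inr ?_
          have : (q1, p2) = q2.val := by
            rw [← hdq, ← hdp, hg]
          rw [this]; exact q2.property
        · rw [adjMat_ee, decide_eq_true_eq]
          exact Subtype.ext hg
      -- (rl, rl)
      · have hdp := hdiag _ hp; have hdq := hdiag _ hq
        rw [adjMat_el, decide_eq_true_eq] at hdp hdq
        have h1 : p1 = q1 := Subtype.ext hg
        subst h1
        rw [← hdp, hdq]
      -- (rl, rr)
      · have hdp := hdiag _ hp; have hdq := hdiag _ hq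
        rw [adjMat_el, decide_eq_true_eq] at hdp
        rw [adjMat_ee, decide_eq_true_eq] at hdq
        subst hdq
        refine absurd (hfool _ hp _ hq ?_ ?_) (by simp)
        · rw [adjMat_ee, decide_eq_true_eq]
          exact Subtype.ext hg
        · rw [adjMat_el, decide_eq_true_eq, ← hg, hdp]
      -- (rr, ll)
      · have hdp := hdiag _ hp; have hdq := hdiag _ hq
        rw [adjMat_ee, decide_eq_true_eq] at hdp
        rw [adjMat_ll, decide_eq_true_eq] at hdq
        subst hdp
        by_cases h1 : q1 = q2 <;> simp [h1] at hg
        refine absurd (hfool _ hq _ hp ?_ ?_) (by simp)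
        · rw [adjMat_le, decide_eq_true_eq, hg]
        · rw [adjMat_el, decide_eq_true_eq, hg]
      -- (rr, lr)
      · have hdp := hdiag _ hp; have hdq := hdiag _ hq
        rw [adjMat_ee, decide_eq_true_eq] at hdp
        rw [adjMat_le, decide_eq_true_eq] at hdq
        subst hdp
        refine absurd (hfool _ hq _ hp ?_ ?_) (by simp)
        · rw [adjMat_le, decide_eq_true_eq, hg, hdq]
        · rw [adjMat_ee, decide_eq_true_eq]
          exact Subtype.ext hg
      -- (rr, rl)
      · have hdp := hdiag _ hp; have hdq := hdiag _ hq
        rw [adjMat_ee, decide_eq_true_eq] at hdp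
        rw [adjMat_el, decide_eq_true_eq] at hdq
        subst hdp
        refine absurd (hfool _ hq _ hp ?_ ?_) (by simp)
        · rw [adjMat_ee, decide_eq_true_eq]
          exact Subtype.ext hg.symm
        · rw [adjMat_el, decide_eq_true_eq, hg, hdq]
      -- (rr, rr)
      · have hdp := hdiag _ hp; have hdq := hdiag _ hq
        rw [adjMat_ee, decide_eq_true_eq] at hdp hdq
        subst hdp; subst hdq
        have h1 : p1 = q1 := Subtype.ext hg
        subst h1; rfl
    -- the image of S under gmap lies in U ⊕ E
    have hsub : S.image (gmap E) ⊆ U.image Sum.inl ∪ E.image Sum.inr := by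
      intro x hx
      rw [Finset.mem_image] at hx
      obtain ⟨p, hp, rfl⟩ := hx
      obtain ⟨p1 | p1, p2 | p2⟩ := p
      · have hdp := hdiag _ hp
        rw [adjMat_ll, decide_eq_true_eq] at hdp
        by_cases h1 : p1 = p2
        · simp only [gmap, if_pos h1]
          refine Finset.mem_union_left _ (Finset.mem_image_of_mem _ ?_)
          rw [hUmem]
          subst h1; exact hp
        · simp only [gmap, if_neg h1]
          refine Finset.mem_union_right _ (Finset.mem_image_of_mem _ ?_)
          exact hdp.resolve_left h1
      · simp only [gmap]
        exact Finset.mem_union_right _ (Finset.mem_image_of_mem _ p2.property)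
      · simp only [gmap]
        exact Finset.mem_union_right _ (Finset.mem_image_of_mem _ p1.property)
      · simp only [gmap]
        exact Finset.mem_union_right _ (Finset.mem_image_of_mem _ p1.property)
    have hcard : S.card ≤ U.card + E.card := by
      calc S.card = (S.image (gmap E)).card := (Finset.card_image_of_injOn hinj).symm
        _ ≤ (U.image Sum.inl ∪ E.image Sum.inr).card := Finset.card_le_card hsub
        _ ≤ (U.image Sum.inl).card + (E.image Sum.inr).card := Finset.card_union_le _ _
        _ = U.card + E.card := by
            rw [Finset.card_image_of_injective _ Sum.inl_injective,
              Finset.card_image_of_injective _ Sum.inr_injective]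
    have hUle : U.card ≤ sSup {k | ∃ U : Finset V, (∀ u ∈ U, ∀ v ∈ U, (u, v) ∉ E) ∧ U.card = k} :=
      le_csSup hbddI ⟨U, hUind, rfl⟩
    omega
  · -- lower bound
    obtain ⟨U, hUind, hUcard⟩ := Nat.sSup_mem hneI hbddI
    set T : Finset ((V ⊕ {e : V × V // e ∈ E}) × (V ⊕ {e : V × V // e ∈ E})) :=
      U.image (fun u => (Sum.inl u, Sum.inl u)) ∪
        E.attach.image (fun e => (Sum.inr e, Sum.inr e)) with hTdef
    have hTmem : ∀ p, p ∈ T ↔ (∃ u ∈ U, p = (Sum.inl u, Sum.inl u)) ∨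
        (∃ e : {e : V × V // e ∈ E}, p = (Sum.inr e, Sum.inr e)) := by
      intro p
      simp only [hTdef, Finset.mem_union, Finset.mem_image, Finset.mem_attach, true_and]
      constructor
      · rintro (⟨u, hu, rfl⟩ | ⟨e, rfl⟩)
        · exact Or.inl ⟨u, hu, rfl⟩
        · exact Or.inr ⟨e, rfl⟩
      · rintro (⟨u, hu, rfl⟩ | ⟨e, rfl⟩)
        · exact Or.inl ⟨u, hu, rfl⟩
        · exact Or.inr ⟨e, rfl⟩
    have hT : IsFoolingSet (adjMat E) T := by
      intro p hp q hq
      rw [hTmem] at hp hq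
      constructor
      · rintro ⟨h1, h2⟩
        obtain (⟨u, hu, rfl⟩ | ⟨e, rfl⟩) := hp <;> obtain (⟨v, hv, rfl⟩ | ⟨f, rfl⟩) := hq
        · rw [adjMat_ll, decide_eq_true_eq] at h1 h2
          obtain (rfl | h1) := h1
          · rfl
          · exact absurd h1 (hUind u hu v hv)
        · rw [adjMat_le, decide_eq_true_eq] at h1
          rw [adjMat_el, decide_eq_true_eq] at h2
          exact absurd (h1 ▸ h2 ▸ rfl) (hloop f.val f.property)
        · rw [adjMat_el, decide_eq_true_eq] at h1
          rw [adjMat_le, decide_eq_true_eq] at h2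
          exact absurd (h2 ▸ h1 ▸ rfl) (hloop e.val e.property)
        · rw [adjMat_ee, decide_eq_true_eq] at h1
          rw [h1]
      · rintro rfl
        obtain (⟨u, hu, rfl⟩ | ⟨e, rfl⟩) := hp
        · constructor <;> · rw [adjMat_ll]; exact decide_eq_true (Or.inl rfl)
        · constructor <;> · rw [adjMat_ee]; exact decide_eq_true rfl
    have hTcard : T.card = U.card + E.card := by
      rw [hTdef, Finset.card_union_of_disjoint, Finset.card_image_of_injective,
        Finset.card_image_of_injective, Finset.card_attach]
      · intro e f hef
        simpa using congrArg Prod.fst hef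
      · intro u v huv
        simpa using congrArg Prod.fst huv
      · rw [Finset.disjoint_left]
        rintro p hp hq
        rw [Finset.mem_image] at hp hq
        obtain ⟨u, hu, rfl⟩ := hp
        obtain ⟨e, he, hpe⟩ := hq
        exact absurd (congrArg Prod.fst hpe) (by simp)
    have : U.card + E.card ∈ {n | ∃ S : Finset ((V ⊕ {e : V × V // e ∈ E}) ×
        (V ⊕ {e : V × V // e ∈ E})), IsFoolingSet (adjMat E) S ∧ S.card = n} :=
      ⟨T, hT, hTcard⟩
    calc sSup {k | ∃ U : Finset V, (∀ u ∈ U, ∀ v ∈ U, (u, v) ∉ E) ∧ U.card = k} + E.card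
        = U.card + E.card := by rw [hUcard]
      _ ≤ foolingSetNumber (adjMat E) := le_csSup hbddF this
end
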